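/- arXiv:2006.10311 — 3 statements merged into one kernel-verified Lean document; each statement's English description precedes it below -/
import Mathlib

section
/- Assume f is L-smooth, ζ-quasar-convex with respect to x*, g satisfies the Expected Residual condition with constant ρ and gradient noise σ². For SGD x^{k+1} = x^k - γ g(x^k) with constant step size γ = ζ/(2(2ρ + L)), the minimum over t < k of E[f(x^t) - f(x*)] is at most 2‖x^0 - x*‖²(2ρ + L)/(ζ² k) + σ²/(2ρ + L). -/
/-!
With `V(y) = ‖y - x*‖²`, one SGD step from `y` satisfies
`E‖y - γ g(y) - x*‖² = V(y) - 2γ⟪∇f(y), y - x*⟫ + γ² E‖g(y)‖²`.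
Quasar-convexity bounds the cross term by `-2γζ (f(y) - f*)`, and the Expected Residual
condition together with `‖∇f(y)‖² ≤ 2L (f(y) - f*)` bounds the second moment by
`2(2ρ + L)(f(y) - f*) + 2σ²`. For `γ = ζ/(2(2ρ + L))` this gives
`E V(x^{t+1}) ≤ E V(x^t) - γζ E[f(x^t) - f*] + 2γ²σ²`; summing over `t < k` and using `V ≥ 0`
bounds the average, hence the minimum, of `E[f(x^t) - f*]`.
-/

open scoped RealInnerProductSpace
open Finset

lemma norm_add_sq_le_two_mul {E : Type*} [SeminormedAddCommGroup E] (a b : E) :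
    ‖a + b‖ ^ 2 ≤ 2 * (‖a‖ ^ 2 + ‖b‖ ^ 2) :=
  (pow_le_pow_left₀ (norm_nonneg _) (norm_add_le a b) 2).trans add_sq_le

lemma exists_lt_le_of_telescope {r d : ℕ → ℝ} {c e : ℝ} (hc : 0 < c) (hr : ∀ t, 0 ≤ r t)
    (hdesc : ∀ t, r (t + 1) ≤ r t - c * d t + e) {k : ℕ} (hk : 0 < k) :
    ∃ t < k, d t ≤ r 0 / (c * k) + e / c := by
  have hsum : ∀ n : ℕ, c * ∑ t ∈ range n, d t ≤ r 0 + n * e - r n := by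
    intro n
    induction n with
    | zero => simp
    | succ n ih =>
      rw [sum_range_succ]
      push_cast
      linarith [hdesc n]
  have hk' : (0 : ℝ) < k := by exact_mod_cast hk
  obtain ⟨t, ht, hle⟩ := exists_le_of_sum_le (nonempty_range_iff.2 hk.ne')
    (f := d) (g := fun _ => r 0 / (c * k) + e / c) <| by
      rw [sum_const, card_range, nsmul_eq_mul, ← mul_le_mul_iff_right₀ hc]
      calc c * ∑ t ∈ range k, d t ≤ r 0 + k * e := by linarith [hsum k, hr k]
        _ = c * (k * (r 0 / (c * k) + e / c)) := by field_simp
  exact ⟨t, mem_range.1 ht, hle⟩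

section SmoothMinimum

variable {E : Type*} [NormedAddCommGroup E] [InnerProductSpace ℝ E]
  {f : E → ℝ} {gradf : E → E} {L : ℝ} {xstar : E}

-- Apply the smoothness bound at the gradient step `y - L⁻¹ • ∇f y`.
lemma norm_sq_le_of_smooth_of_isMin (hL : 0 < L)
    (hsmooth : ∀ x z : E, f z ≤ f x + ⟪gradf x, z - x⟫ + L / 2 * ‖z - x‖ ^ 2)
    (hmin : ∀ x, f xstar ≤ f x) (y : E) :
    ‖gradf y‖ ^ 2 ≤ 2 * L * (f y - f xstar) := by
  have hstep := hsmooth y (y - L⁻¹ • gradf y)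
  rw [sub_sub_cancel_left, inner_neg_right, real_inner_smul_right, real_inner_self_eq_norm_sq,
    norm_neg, norm_smul, Real.norm_of_nonneg (inv_nonneg.2 hL.le)] at hstep
  have hdecrease : L⁻¹ / 2 * ‖gradf y‖ ^ 2 ≤ f y - f xstar := by
    have := hmin (y - L⁻¹ • gradf y)
    have hL' : L / 2 * (L⁻¹ * ‖gradf y‖) ^ 2 = L⁻¹ / 2 * ‖gradf y‖ ^ 2 := by field_simp
    linarith
  calc ‖gradf y‖ ^ 2 = 2 * L * (L⁻¹ / 2 * ‖gradf y‖ ^ 2) := by field_simp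
    _ ≤ 2 * L * (f y - f xstar) := by gcongr

lemma grad_eq_zero_of_smooth_of_isMin (hL : 0 < L)
    (hsmooth : ∀ x z : E, f z ≤ f x + ⟪gradf x, z - x⟫ + L / 2 * ‖z - x‖ ^ 2)
    (hmin : ∀ x, f xstar ≤ f x) : gradf xstar = 0 := by
  have h := norm_sq_le_of_smooth_of_isMin hL hsmooth hmin xstar
  rw [sub_self, mul_zero] at h
  exact norm_eq_zero.1 (pow_eq_zero_iff two_ne_zero |>.1 (le_antisymm h (sq_nonneg _)))

end SmoothMinimum

section WeightedAverage

variable {E : Type*} [NormedAddCommGroup E] [InnerProductSpace ℝ E]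
  {ι : Type*} [Fintype ι] {p : ι → ℝ}

lemma sum_mul_inner_left (v : ι → E) (a : E) :
    ∑ i, p i * ⟪v i, a⟫ = ⟪∑ i, p i • v i, a⟫ := by
  simp only [sum_inner, real_inner_smul_left]

lemma sum_mul_norm_sq_eq_add_norm_sq_mean (hp1 : ∑ i, p i = 1) (v : ι → E) :
    ∑ i, p i * ‖v i‖ ^ 2 =
      ∑ i, p i * ‖v i - ∑ j, p j • v j‖ ^ 2 + ‖∑ j, p j • v j‖ ^ 2 := by
  set m := ∑ j, p j • v j
  have hcentered : ∑ i, p i * ⟪v i - m, m⟫ = 0 := by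
    rw [sum_mul_inner_left]
    simp only [smul_sub, sum_sub_distrib, ← sum_smul, hp1, one_smul, sub_self, m, inner_zero_left]
  calc ∑ i, p i * ‖v i‖ ^ 2
      = ∑ i, (p i * ‖v i - m‖ ^ 2 + 2 * (p i * ⟪v i - m, m⟫) + p i * ‖m‖ ^ 2) := by
        refine sum_congr rfl fun i _ => ?_
        conv_lhs => rw [← sub_add_cancel (v i) m, norm_add_sq_real]
        ring
    _ = ∑ i, p i * ‖v i - m‖ ^ 2 + ‖m‖ ^ 2 := by
        rw [sum_add_distrib, sum_add_distrib, ← mul_sum, hcentered, ← sum_mul, hp1]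
        ring

lemma sum_mul_norm_sub_smul_sq (hp1 : ∑ i, p i = 1) (a : E) (γ : ℝ) (v : ι → E) :
    ∑ i, p i * ‖a - γ • v i‖ ^ 2 =
      ‖a‖ ^ 2 - 2 * γ * ⟪∑ i, p i • v i, a⟫ + γ ^ 2 * ∑ i, p i * ‖v i‖ ^ 2 := by
  calc ∑ i, p i * ‖a - γ • v i‖ ^ 2
      = ∑ i, (p i * ‖a‖ ^ 2 - 2 * γ * (p i * ⟪v i, a⟫) + γ ^ 2 * (p i * ‖v i‖ ^ 2)) := by
        refine sum_congr rfl fun i _ => ?_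
        rw [norm_sub_sq_real, real_inner_smul_right, norm_smul, mul_pow, Real.norm_eq_abs,
          sq_abs, real_inner_comm]
        ring
    _ = _ := by
        rw [sum_add_distrib, sum_sub_distrib, ← sum_mul, ← mul_sum, ← mul_sum, hp1,
          sum_mul_inner_left, one_mul]

end WeightedAverage

section Paths

variable {ι : Type*} (p : ι → ℝ)

def pathWeight {t : ℕ} (ω : Fin t → ι) : ℝ := ∏ s, p (ω s)

variable {p}

lemma pathWeight_nonneg (hp0 : ∀ i, 0 ≤ p i) {t : ℕ} (ω : Fin t → ι) : 0 ≤ pathWeight p ω :=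
  prod_nonneg fun s _ => hp0 (ω s)

lemma sum_pathWeight [Fintype ι] (hp1 : ∑ i, p i = 1) (t : ℕ) :
    ∑ ω : Fin t → ι, pathWeight p ω = 1 := by
  simp only [pathWeight, ← Fintype.prod_sum, hp1, prod_const_one]

lemma sum_pathWeight_mul_succ [Fintype ι] {t : ℕ} (F : (Fin (t + 1) → ι) → ℝ) :
    ∑ ω, pathWeight p ω * F ω =
      ∑ ω : Fin t → ι, pathWeight p ω * ∑ i, p i * F (Fin.snoc ω i) := by
  rw [← (Fin.snocEquiv fun _ => ι).sum_comp, Fintype.sum_prod_type, sum_comm]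
  change ∑ ω, ∑ i, pathWeight p (Fin.snoc ω i) * F (Fin.snoc ω i) = _
  refine sum_congr rfl fun ω _ => ?_
  rw [mul_sum]
  refine sum_congr rfl fun i _ => ?_
  simp [pathWeight, Fin.prod_univ_castSucc, mul_assoc]

-- The padding by `default` is harmless: `x t` only reads the first `t` samples (`iterate_congr`).
def extendPath [Inhabited ι] {t : ℕ} (ω : Fin t → ι) : ℕ → ι :=
  fun m => if h : m < t then ω ⟨m, h⟩ else default

variable {E : Type*} {step : ι → E → E} {x : ℕ → (ℕ → ι) → E} {x0 : E}

lemma iterate_congr (hx0 : ∀ ω, x 0 ω = x0) (hrec : ∀ k ω, x (k + 1) ω = step (ω k) (x k ω))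
    {t : ℕ} {ω ω' : ℕ → ι} (h : ∀ m < t, ω m = ω' m) : x t ω = x t ω' := by
  induction t with
  | zero => rw [hx0, hx0]
  | succ n ih =>
    rw [hrec, hrec, ih fun m hm => h m (Nat.lt_succ_of_lt hm), h n n.lt_succ_self]

lemma iterate_extendPath_snoc [Inhabited ι] (hx0 : ∀ ω, x 0 ω = x0)
    (hrec : ∀ k ω, x (k + 1) ω = step (ω k) (x k ω)) {t : ℕ} (ω : Fin t → ι) (i : ι) :
    x (t + 1) (extendPath (Fin.snoc ω i)) = step i (x t (extendPath ω)) := by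
  rw [hrec]
  congr 1
  · simp only [extendPath, dif_pos t.lt_succ_self]
    exact Fin.snoc_last (α := fun _ => ι) ..
  · refine iterate_congr hx0 hrec fun m hm => ?_
    simp only [extendPath, dif_pos hm, dif_pos (Nat.lt_succ_of_lt hm)]
    exact Fin.snoc_castSucc (α := fun _ => ι) (i := ⟨m, hm⟩) ..

lemma exists_lt_sum_pathWeight_mul_le_of_descent [Fintype ι] [Inhabited ι]
    (hp0 : ∀ i, 0 ≤ p i) (hp1 : ∑ i, p i = 1)
    (hx0 : ∀ ω, x 0 ω = x0) (hrec : ∀ k ω, x (k + 1) ω = step (ω k) (x k ω))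
    {V D : E → ℝ} {c e : ℝ} (hc : 0 < c) (hV : ∀ y, 0 ≤ V y)
    (hdesc : ∀ y, ∑ i, p i * V (step i y) ≤ V y - c * D y + e) {k : ℕ} (hk : 0 < k) :
    ∃ t < k, ∑ ω : Fin t → ι, pathWeight p ω * D (x t (extendPath ω)) ≤
      V x0 / (c * k) + e / c := by
  set r : ℕ → ℝ := fun t => ∑ ω : Fin t → ι, pathWeight p ω * V (x t (extendPath ω))
  have hr : ∀ t, 0 ≤ r t :=
    fun t => sum_nonneg fun ω _ => mul_nonneg (pathWeight_nonneg hp0 ω) (hV _)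
  have hr0 : r 0 = V x0 := by simp [r, hx0, pathWeight]
  have hstep : ∀ t, r (t + 1) ≤
      r t - c * ∑ ω : Fin t → ι, pathWeight p ω * D (x t (extendPath ω)) + e := by
    intro t
    calc r (t + 1)
        = ∑ ω : Fin t → ι, pathWeight p ω * ∑ i, p i * V (step i (x t (extendPath ω))) := by
          simp only [r, sum_pathWeight_mul_succ, iterate_extendPath_snoc hx0 hrec]
      _ ≤ ∑ ω : Fin t → ι, pathWeight p ω *
            (V (x t (extendPath ω)) - c * D (x t (extendPath ω)) + e) :=
          sum_le_sum fun ω _ => mul_le_mul_of_nonneg_left (hdesc _) (pathWeight_nonneg hp0 ω)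
      _ = _ := by
          simp only [r, mul_add, mul_sub, sum_add_distrib, sum_sub_distrib, ← sum_mul,
            sum_pathWeight hp1, mul_left_comm _ c, ← mul_sum]
          ring
  simpa only [hr0] using exists_lt_le_of_telescope hc hr hstep hk

end Paths

section SGD

variable {E : Type*} [NormedAddCommGroup E] [InnerProductSpace ℝ E]
  {ι : Type*} [Fintype ι] {p : ι → ℝ}
  {f : E → ℝ} {gradf : E → E} {g : ι → E → E} {L ρ σ2 : ℝ} {xstar : E}

lemma sum_mul_norm_sq_le_of_expectedResidual (hp0 : ∀ i, 0 ≤ p i) (hp1 : ∑ i, p i = 1)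
    (hgstar : gradf xstar = 0) (hgrad : ∀ y, ‖gradf y‖ ^ 2 ≤ 2 * L * (f y - f xstar))
    (hunbiased : ∀ x : E, ∑ i, p i • g i x = gradf x)
    (hER : ∀ x : E, (∑ i, p i * ‖g i x - g i xstar - (gradf x - gradf xstar)‖ ^ 2) ≤
        2 * ρ * (f x - f xstar))
    (hσ : (∑ i, p i * ‖g i xstar‖ ^ 2) = σ2) (y : E) :
    ∑ i, p i * ‖g i y‖ ^ 2 ≤ 2 * (2 * ρ + L) * (f y - f xstar) + 2 * σ2 := by
  have hvar : ∑ i, p i * ‖g i y - gradf y‖ ^ 2 ≤ 4 * ρ * (f y - f xstar) + 2 * σ2 := by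
    calc ∑ i, p i * ‖g i y - gradf y‖ ^ 2
        ≤ ∑ i, p i * (2 * (‖g i y - g i xstar - (gradf y - gradf xstar)‖ ^ 2
            + ‖g i xstar‖ ^ 2)) := by
          refine sum_le_sum fun i _ => mul_le_mul_of_nonneg_left ?_ (hp0 i)
          have hsplit : g i y - gradf y =
              (g i y - g i xstar - (gradf y - gradf xstar)) + g i xstar := by
            rw [hgstar]
            abel
          rw [hsplit]
          exact norm_add_sq_le_two_mul _ _
      _ = 2 * ∑ i, p i * ‖g i y - g i xstar - (gradf y - gradf xstar)‖ ^ 2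
            + 2 * ∑ i, p i * ‖g i xstar‖ ^ 2 := by
          simp only [mul_sum, ← sum_add_distrib]
          exact sum_congr rfl fun i _ => by ring
      _ ≤ 4 * ρ * (f y - f xstar) + 2 * σ2 := by
          rw [hσ]
          linarith [hER y]
  rw [sum_mul_norm_sq_eq_add_norm_sq_mean hp1, hunbiased]
  linarith [hgrad y]

lemma sum_mul_norm_sgd_step_sub_sq_le {ζ γ : ℝ} (hp1 : ∑ i, p i = 1) (hζ0 : 0 < ζ) (hγ0 : 0 ≤ γ)
    (hγ : γ * (2 * ρ + L) = ζ / 2)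
    (hquasar : ∀ x : E, f xstar ≥ f x + (1 / ζ) * ⟪gradf x, xstar - x⟫)
    (hunbiased : ∀ x : E, ∑ i, p i • g i x = gradf x)
    (hmoment : ∀ y, ∑ i, p i * ‖g i y‖ ^ 2 ≤ 2 * (2 * ρ + L) * (f y - f xstar) + 2 * σ2)
    (y : E) :
    ∑ i, p i * ‖y - γ • g i y - xstar‖ ^ 2 ≤
      ‖y - xstar‖ ^ 2 - γ * ζ * (f y - f xstar) + 2 * γ ^ 2 * σ2 := by
  have hcorr : ζ * (f y - f xstar) ≤ ⟪gradf y, y - xstar⟫ := by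
    have h := hquasar y
    rw [← neg_sub y xstar, inner_neg_right] at h
    have : ζ * (1 / ζ * ⟪gradf y, y - xstar⟫) = ⟪gradf y, y - xstar⟫ := by field_simp
    nlinarith
  simp only [sub_right_comm _ _ xstar]
  rw [sum_mul_norm_sub_smul_sq hp1, hunbiased]
  have hnoise := mul_le_mul_of_nonneg_left (hmoment y) (sq_nonneg γ)
  have hdrift := mul_le_mul_of_nonneg_left hcorr (by positivity : (0 : ℝ) ≤ 2 * γ)
  linear_combination hnoise + hdrift + (2 * γ * (f y - f xstar)) * hγ

end SGD

theorem sgd_quasar_convex_constant_step_general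
    {E : Type*} [NormedAddCommGroup E] [InnerProductSpace ℝ E]
    {ι : Type*} [Fintype ι] [Inhabited ι] (p : ι → ℝ)
    (hp0 : ∀ i, 0 ≤ p i) (hp1 : ∑ i, p i = 1)
    (f : E → ℝ) (gradf : E → E) (g : ι → E → E)
    (L ζ ρ σ2 γ : ℝ) (xstar x0 : E)
    (hL : 0 < L) (hζ0 : 0 < ζ) (hρ : 0 ≤ ρ)
    (hsmooth : ∀ x z : E, f z ≤ f x + ⟪gradf x, z - x⟫ + L / 2 * ‖z - x‖ ^ 2)
    (hquasar : ∀ x : E, f xstar ≥ f x + (1 / ζ) * ⟪gradf x, xstar - x⟫)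
    (hmin : ∀ x, f xstar ≤ f x)
    (hunbiased : ∀ x : E, ∑ i, p i • g i x = gradf x)
    (hER : ∀ x : E, (∑ i, p i * ‖g i x - g i xstar - (gradf x - gradf xstar)‖ ^ 2) ≤
        2 * ρ * (f x - f xstar))
    (hσ : (∑ i, p i * ‖g i xstar‖ ^ 2) = σ2)
    (hγ : γ = ζ / (2 * (2 * ρ + L)))
    (x : ℕ → (ℕ → ι) → E)
    (hx0 : ∀ ω, x 0 ω = x0)
    (hrec : ∀ k ω, x (k + 1) ω = x k ω - γ • g (ω k) (x k ω)) :
    ∀ k : ℕ, 0 < k → ∃ t < k,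
      (∑ ω : Fin t → ι, (∏ s, p (ω s)) *
          (f (x t (fun m => if h : m < t then ω ⟨m, h⟩ else default)) - f xstar)) ≤
        2 * ‖x0 - xstar‖ ^ 2 * (2 * ρ + L) / (ζ ^ 2 * k) + σ2 / (2 * ρ + L) := by
  intro k hk
  have hγ0 : 0 < γ := by rw [hγ]; positivity
  have hγA : γ * (2 * ρ + L) = ζ / 2 := by rw [hγ]; field_simp
  have hmoment := sum_mul_norm_sq_le_of_expectedResidual hp0 hp1
    (grad_eq_zero_of_smooth_of_isMin hL hsmooth hmin)
    (norm_sq_le_of_smooth_of_isMin hL hsmooth hmin) hunbiased hER hσ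
  obtain ⟨t, htk, ht⟩ := exists_lt_sum_pathWeight_mul_le_of_descent
    (step := fun i y => y - γ • g i y) (V := fun y => ‖y - xstar‖ ^ 2)
    (D := fun y => f y - f xstar) hp0 hp1 hx0 hrec (mul_pos hγ0 hζ0) (fun _ => sq_nonneg _)
    (sum_mul_norm_sgd_step_sub_sq_le hp1 hζ0 hγ0.le hγA hquasar hunbiased hmoment) hk
  refine ⟨t, htk, ht.trans_eq ?_⟩
  have hA : 0 < 2 * ρ + L := by positivity
  rw [hγ]
  field_simp

/-- SGD on an `L`-smooth, `ζ`-quasar-convex function under the Expected Residual condition,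
with constant step size `γ = ζ/(2(2ρ + L))`:
`min_{t<k} E[f(x^t) - f(x*)] ≤ 2‖x⁰ - x*‖²(2ρ+L)/(ζ²k) + σ²/(2ρ+L)`. -/
theorem sgd_quasar_convex_constant_step
    {E : Type*} [NormedAddCommGroup E] [InnerProductSpace ℝ E]
    {ι : Type*} [Fintype ι] [Inhabited ι] (p : ι → ℝ)
    (hp0 : ∀ i, 0 ≤ p i) (hp1 : ∑ i, p i = 1)
    (f : E → ℝ) (gradf : E → E) (g : ι → E → E)
    (L ζ ρ σ2 γ : ℝ) (xstar x0 : E)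
    (hL : 0 < L) (hζ0 : 0 < ζ) (hζ1 : ζ ≤ 1) (hρ : 0 ≤ ρ)
    (hsmooth : ∀ x z : E, f z ≤ f x + ⟪gradf x, z - x⟫ + L / 2 * ‖z - x‖ ^ 2)
    (hquasar : ∀ x : E, f xstar ≥ f x + (1 / ζ) * ⟪gradf x, xstar - x⟫)
    (hmin : ∀ x, f xstar ≤ f x)
    (hunbiased : ∀ x : E, ∑ i, p i • g i x = gradf x)
    (hER : ∀ x : E, (∑ i, p i * ‖g i x - g i xstar - (gradf x - gradf xstar)‖ ^ 2) ≤
        2 * ρ * (f x - f xstar))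
    (hσ : (∑ i, p i * ‖g i xstar‖ ^ 2) = σ2)
    (hγ : γ = ζ / (2 * (2 * ρ + L)))
    (x : ℕ → (ℕ → ι) → E)
    (hx0 : ∀ ω, x 0 ω = x0)
    (hrec : ∀ k ω, x (k + 1) ω = x k ω - γ • g (ω k) (x k ω)) :
    ∀ k : ℕ, 0 < k → ∃ t < k,
      (∑ ω : Fin t → ι, (∏ s, p (ω s)) *
          (f (x t (fun m => if h : m < t then ω ⟨m, h⟩ else default)) - f xstar)) ≤
        2 * ‖x0 - xstar‖ ^ 2 * (2 * ρ + L) / (ζ ^ 2 * k) + σ2 / (2 * ρ + L) :=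
  sgd_quasar_convex_constant_step_general p hp0 hp1 f gradf g L ζ ρ σ2 γ xstar x0 hL hζ0 hρ hsmooth
    hquasar hmin hunbiased hER hσ hγ x hx0 hrec
end

section
/- Assume f is L-smooth, μ-PL, g satisfies ER(ρ), and interpolation holds (so σ = 0). Then SGD with step size γ = 1/(L(1 + 2ρ/μ)) satisfies E[f(x^k) - f*] ≤ (1 - γμ)^k (f(x^0) - f*), i.e. converges linearly to the exact minimum. -/
open scoped RealInnerProductSpace
open Finset

/-!
Smoothness and unbiasedness give `E f(x⁺) ≤ f x - γ‖∇f x‖² + (Lγ²/2) E‖g‖²`, and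
`E‖g‖² = ‖∇f x‖² + E‖g - ∇f x‖²`. Under interpolation the Expected Residual condition bounds the
variance term by `2ρ(f x - f*)`, PL bounds `‖∇f x‖²` from below by `2μ(f x - f*)`, and the step size
satisfies `Lγ(μ + ρ) ≤ μ`; together these give the one-step contraction
`E[f(x⁺) - f*] ≤ (1 - γμ)(f x - f*)`. Since the weight of a path of length `k + 1` factors as the
weight of its first `k` steps times `p` of the last index, the contraction iterates.
-/

section Descent

variable {E : Type*} [NormedAddCommGroup E] [InnerProductSpace ℝ E] {ι : Type*} [Fintype ι]

theorem sum_mul_inner_eq_inner_sum_smul (p : ι → ℝ) (a : E) (v : ι → E) :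
    ∑ i, p i * ⟪a, v i⟫ = ⟪a, ∑ i, p i • v i⟫ := by
  simp only [inner_sum, real_inner_smul_right]

theorem sum_mul_norm_sq_eq_sum_mul_norm_sub_sq_add {p : ι → ℝ} (hp1 : ∑ i, p i = 1)
    (v : ι → E) :
    ∑ i, p i * ‖v i‖ ^ 2 =
      ∑ i, p i * ‖v i - ∑ j, p j • v j‖ ^ 2 + ‖∑ j, p j • v j‖ ^ 2 := by
  set m := ∑ j, p j • v j
  calc ∑ i, p i * ‖v i‖ ^ 2
      = ∑ i, (p i * ‖v i - m‖ ^ 2 + 2 * (p i * ⟪m, v i⟫) - p i * ‖m‖ ^ 2) := by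
        refine sum_congr rfl fun i _ => ?_
        rw [norm_sub_sq_real, real_inner_comm]
        ring
    _ = ∑ i, p i * ‖v i - m‖ ^ 2 + 2 * ⟪m, m⟫ - ‖m‖ ^ 2 := by
        rw [sum_sub_distrib, sum_add_distrib, ← mul_sum, ← sum_mul, hp1,
          sum_mul_inner_eq_inner_sum_smul, one_mul]
    _ = ∑ i, p i * ‖v i - m‖ ^ 2 + ‖m‖ ^ 2 := by
        rw [real_inner_self_eq_norm_sq]
        ring

variable {f : E → ℝ} {gradf : E → E} {L : ℝ}

theorem le_sub_inner_add_of_smooth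
    (hsmooth : ∀ x z : E, f z ≤ f x + ⟪gradf x, z - x⟫ + L / 2 * ‖z - x‖ ^ 2)
    (y v : E) (γ : ℝ) :
    f (y - γ • v) ≤ f y - γ * ⟪gradf y, v⟫ + L / 2 * γ ^ 2 * ‖v‖ ^ 2 := by
  have h := hsmooth y (y - γ • v)
  rwa [sub_sub_cancel_left, inner_neg_right, real_inner_smul_right, norm_neg, norm_smul,
    mul_pow, Real.norm_eq_abs, sq_abs, ← sub_eq_add_neg, ← mul_assoc] at h

theorem sum_mul_le_of_smooth
    (hsmooth : ∀ x z : E, f z ≤ f x + ⟪gradf x, z - x⟫ + L / 2 * ‖z - x‖ ^ 2)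
    {p : ι → ℝ} (hp0 : ∀ i, 0 ≤ p i) (hp1 : ∑ i, p i = 1)
    (y : E) (v : ι → E) (hv : ∑ i, p i • v i = gradf y) (γ : ℝ) :
    ∑ i, p i * f (y - γ • v i) ≤
      f y - γ * ‖gradf y‖ ^ 2 +
        L / 2 * γ ^ 2 * (∑ i, p i * ‖v i - gradf y‖ ^ 2 + ‖gradf y‖ ^ 2) := by
  calc ∑ i, p i * f (y - γ • v i)
      ≤ ∑ i, p i * (f y - γ * ⟪gradf y, v i⟫ + L / 2 * γ ^ 2 * ‖v i‖ ^ 2) :=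
        sum_le_sum fun i _ =>
          mul_le_mul_of_nonneg_left (le_sub_inner_add_of_smooth hsmooth y (v i) γ) (hp0 i)
    _ = ∑ i, (p i * f y - γ * (p i * ⟪gradf y, v i⟫) + L / 2 * γ ^ 2 * (p i * ‖v i‖ ^ 2)) :=
        sum_congr rfl fun i _ => by ring
    _ = (∑ i, p i) * f y - γ * ∑ i, p i * ⟪gradf y, v i⟫ +
          L / 2 * γ ^ 2 * ∑ i, p i * ‖v i‖ ^ 2 := by
        rw [sum_add_distrib, sum_sub_distrib, ← sum_mul, ← mul_sum, ← mul_sum]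
    _ = _ := by
        rw [hp1, sum_mul_norm_sq_eq_sum_mul_norm_sub_sq_add hp1, sum_mul_inner_eq_inner_sum_smul,
          hv, real_inner_self_eq_norm_sq]
        ring

theorem sum_mul_sub_le_of_smooth_of_PL {μ ρ γ fstar : ℝ}
    (hsmooth : ∀ x z : E, f z ≤ f x + ⟪gradf x, z - x⟫ + L / 2 * ‖z - x‖ ^ 2)
    {p : ι → ℝ} (hp0 : ∀ i, 0 ≤ p i) (hp1 : ∑ i, p i = 1)
    (y : E) (v : ι → E) (hv : ∑ i, p i • v i = gradf y)
    (hPL : ‖gradf y‖ ^ 2 ≥ 2 * μ * (f y - fstar))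
    (hvar : ∑ i, p i * ‖v i - gradf y‖ ^ 2 ≤ 2 * ρ * (f y - fstar))
    (hmin : fstar ≤ f y) (hL : 0 ≤ L) (hμ : 0 < μ) (hρ : 0 ≤ ρ) (hγ : 0 ≤ γ)
    (hγμ : L * γ * (μ + ρ) ≤ μ) :
    ∑ i, p i * (f (y - γ • v i) - fstar) ≤ (1 - γ * μ) * (f y - fstar) := by
  have hdesc := sum_mul_le_of_smooth hsmooth hp0 hp1 y v hv γ
  have hLγ : L * γ ≤ 1 := by nlinarith [mul_nonneg (mul_nonneg hL hγ) hρ]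
  have hPL' := mul_le_mul_of_nonneg_left hPL (by nlinarith : 0 ≤ γ * (1 - L * γ / 2))
  have hvar' := mul_le_mul_of_nonneg_left hvar (by positivity : 0 ≤ L / 2 * γ ^ 2)
  have hslack := mul_nonneg (mul_nonneg hγ (sub_nonneg.2 hmin)) (sub_nonneg.2 hγμ)
  simp only [mul_sub, sum_sub_distrib, ← sum_mul, hp1, one_mul]
  nlinarith
  
end Descent

section RandomPaths

variable {ι : Type*} [Inhabited ι]

def extendByDefault {k : ℕ} (ω : Fin k → ι) : ℕ → ι :=
  fun m => if h : m < k then ω ⟨m, h⟩ else default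

theorem extendByDefault_snoc_of_lt {k m : ℕ} (ω : Fin k → ι) (i : ι) (hm : m < k) :
    extendByDefault (Fin.snoc ω i : Fin (k + 1) → ι) m = extendByDefault ω m := by
  simp only [extendByDefault, dif_pos hm, dif_pos (hm.trans k.lt_succ_self)]
  exact Fin.snoc_castSucc (α := fun _ => ι) (i := ⟨m, hm⟩) ..

theorem extendByDefault_snoc_self {k : ℕ} (ω : Fin k → ι) (i : ι) :
    extendByDefault (Fin.snoc ω i : Fin (k + 1) → ι) k = i := by
  simp only [extendByDefault, dif_pos k.lt_succ_self]
  exact Fin.snoc_last (α := fun _ => ι) ..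

end RandomPaths

theorem sum_pi_fin_succ_prod_mul {ι : Type*} [Fintype ι] (p : ι → ℝ) {k : ℕ}
    (F : (Fin (k + 1) → ι) → ℝ) :
    ∑ ω : Fin (k + 1) → ι, (∏ s, p (ω s)) * F ω =
      ∑ ω : Fin k → ι, (∏ s, p (ω s)) * ∑ i, p i * F (Fin.snoc ω i) := by
  rw [← (Fin.snocEquiv fun _ => ι).sum_comp, Fintype.sum_prod_type_right]
  refine sum_congr rfl fun ω _ => ?_
  rw [mul_sum]
  refine sum_congr rfl fun i _ => ?_
  simp only [Fin.snocEquiv_apply, Fin.prod_univ_castSucc, Fin.snoc_castSucc, Fin.snoc_last, mul_assoc]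
  rfl

section Iterates

variable {ι E : Type*} {T : ι → E → E} {x : ℕ → (ℕ → ι) → E}

theorem iterate_eq_of_eqOn_lt {x0 : E} (hx0 : ∀ ω, x 0 ω = x0)
    (hrec : ∀ k ω, x (k + 1) ω = T (ω k) (x k ω)) :
    ∀ k (ω ω' : ℕ → ι), (∀ m < k, ω m = ω' m) → x k ω = x k ω'
  | 0, ω, ω', _ => by rw [hx0, hx0]
  | k + 1, ω, ω', h => by
    rw [hrec, hrec, h k k.lt_succ_self,
      iterate_eq_of_eqOn_lt hx0 hrec k ω ω' fun m hm => h m (hm.trans k.lt_succ_self)]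

theorem iterate_extendByDefault_snoc [Inhabited ι] {x0 : E} (hx0 : ∀ ω, x 0 ω = x0)
    (hrec : ∀ k ω, x (k + 1) ω = T (ω k) (x k ω)) {k : ℕ} (ω : Fin k → ι) (i : ι) :
    x (k + 1) (extendByDefault (Fin.snoc ω i : Fin (k + 1) → ι)) =
      T i (x k (extendByDefault ω)) := by
  rw [hrec, extendByDefault_snoc_self,
    iterate_eq_of_eqOn_lt hx0 hrec k _ _ fun m hm => extendByDefault_snoc_of_lt ω i hm]

theorem sum_prod_mul_iterate_le_pow [Fintype ι] [Inhabited ι] {p : ι → ℝ} (hp0 : ∀ i, 0 ≤ p i)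
    {V : E → ℝ} (hV : ∀ y, 0 ≤ V y) {c : ℝ} (hstep : ∀ y, ∑ i, p i * V (T i y) ≤ c * V y)
    {x0 : E} (hx0 : ∀ ω, x 0 ω = x0) (hrec : ∀ k ω, x (k + 1) ω = T (ω k) (x k ω)) (k : ℕ) :
    ∑ ω : Fin k → ι, (∏ s, p (ω s)) * V (x k (extendByDefault ω)) ≤ c ^ k * V x0 := by
  induction k with
  | zero => simp [hx0]
  | succ k ih =>
    by_cases hc : 0 ≤ c
    · calc ∑ ω : Fin (k + 1) → ι, (∏ s, p (ω s)) * V (x (k + 1) (extendByDefault ω))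
          = ∑ ω : Fin k → ι, (∏ s, p (ω s)) * ∑ i, p i * V (T i (x k (extendByDefault ω))) := by
            simp only [sum_pi_fin_succ_prod_mul, iterate_extendByDefault_snoc hx0 hrec]
        _ ≤ ∑ ω : Fin k → ι, (∏ s, p (ω s)) * (c * V (x k (extendByDefault ω))) :=
            sum_le_sum fun ω _ =>
              mul_le_mul_of_nonneg_left (hstep _) (prod_nonneg fun s _ => hp0 _)
        _ = c * ∑ ω : Fin k → ι, (∏ s, p (ω s)) * V (x k (extendByDefault ω)) := by
            rw [mul_sum]
            exact sum_congr rfl fun ω _ => mul_left_comm _ _ _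
        _ ≤ c * (c ^ k * V x0) := mul_le_mul_of_nonneg_left ih hc
        _ = c ^ (k + 1) * V x0 := by ring
    · have hV0 : ∀ y, V y = 0 := fun y =>
        (hV y).antisymm' <| by
          have : 0 ≤ ∑ i, p i * V (T i y) := sum_nonneg fun i _ => mul_nonneg (hp0 i) (hV _)
          nlinarith [hstep y]
      simp [hV0]

end Iterates

theorem mul_sgd_step_size_mul_le {L μ ρ : ℝ} (hL : 0 < L) (hμ : 0 < μ) (hρ : 0 ≤ ρ) :
    L * (1 / (L * (1 + 2 * ρ / μ))) * (μ + ρ) ≤ μ := by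
  field_simp
  nlinarith

theorem sgd_PL_interpolation_linear_general
    {E : Type*} [NormedAddCommGroup E] [InnerProductSpace ℝ E]
    {ι : Type*} [Fintype ι] [Inhabited ι] (p : ι → ℝ)
    (hp0 : ∀ i, 0 ≤ p i) (hp1 : ∑ i, p i = 1)
    (f : E → ℝ) (gradf : E → E) (g : ι → E → E)
    (L μ ρ γ fstar : ℝ) (xstar x0 : E)
    (hL : 0 < L) (hμ : 0 < μ) (hρ : 0 ≤ ρ)
    (hsmooth : ∀ x z : E, f z ≤ f x + ⟪gradf x, z - x⟫ + L / 2 * ‖z - x‖ ^ 2)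
    (hPL : ∀ x : E, ‖gradf x‖ ^ 2 ≥ 2 * μ * (f x - fstar))
    (hmin : ∀ x, fstar ≤ f x) (hgs : gradf xstar = 0)
    (hunbiased : ∀ x : E, ∑ i, p i • g i x = gradf x)
    (hER : ∀ x : E, (∑ i, p i * ‖g i x - g i xstar - (gradf x - gradf xstar)‖ ^ 2) ≤
        2 * ρ * (f x - fstar))
    (hinterp : ∀ i, g i xstar = 0)
    (hγ : γ = 1 / (L * (1 + 2 * ρ / μ)))
    (x : ℕ → (ℕ → ι) → E)
    (hx0 : ∀ ω, x 0 ω = x0)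
    (hrec : ∀ k ω, x (k + 1) ω = x k ω - γ • g (ω k) (x k ω)) :
    ∀ k : ℕ,
      (∑ ω : Fin k → ι, (∏ s, p (ω s)) *
          (f (x k (fun m => if h : m < k then ω ⟨m, h⟩ else default)) - fstar)) ≤
        (1 - γ * μ) ^ k * (f x0 - fstar) := by
  have hγ0 : 0 ≤ γ := by rw [hγ]; positivity
  have hγμ : L * γ * (μ + ρ) ≤ μ := hγ ▸ mul_sgd_step_size_mul_le hL hμ hρ
  have hstep (y : E) :
      ∑ i, p i * (f (y - γ • g i y) - fstar) ≤ (1 - γ * μ) * (f y - fstar) :=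
    sum_mul_sub_le_of_smooth_of_PL hsmooth hp0 hp1 y (fun i => g i y) (hunbiased y) (hPL y)
      (by simpa [hinterp, hgs] using hER y) (hmin y) hL.le hμ hρ hγ0 hγμ
  exact sum_prod_mul_iterate_le_pow (T := fun i y => y - γ • g i y) (V := fun y => f y - fstar)
    hp0 (fun y => sub_nonneg.2 (hmin y)) hstep hx0 hrec

/-- Under interpolation (so the gradient noise vanishes: `g(x*) = 0`), SGD on an `L`-smooth
`μ`-PL function satisfying the Expected Residual condition with step size
`γ = 1/(L(1 + 2ρ/μ))` converges linearly: `E[f(x^k) - f*] ≤ (1 - γμ)^k (f(x⁰) - f*)`. -/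
theorem sgd_PL_interpolation_linear
    {E : Type*} [NormedAddCommGroup E] [InnerProductSpace ℝ E]
    {ι : Type*} [Fintype ι] [Inhabited ι] (p : ι → ℝ)
    (hp0 : ∀ i, 0 ≤ p i) (hp1 : ∑ i, p i = 1)
    (f : E → ℝ) (gradf : E → E) (g : ι → E → E)
    (L μ ρ γ fstar : ℝ) (xstar x0 : E)
    (hL : 0 < L) (hμ : 0 < μ) (hρ : 0 ≤ ρ)
    (hsmooth : ∀ x z : E, f z ≤ f x + ⟪gradf x, z - x⟫ + L / 2 * ‖z - x‖ ^ 2)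
    (hPL : ∀ x : E, ‖gradf x‖ ^ 2 ≥ 2 * μ * (f x - fstar))
    (hmin : ∀ x, fstar ≤ f x) (hfs : f xstar = fstar) (hgs : gradf xstar = 0)
    (hunbiased : ∀ x : E, ∑ i, p i • g i x = gradf x)
    (hER : ∀ x : E, (∑ i, p i * ‖g i x - g i xstar - (gradf x - gradf xstar)‖ ^ 2) ≤
        2 * ρ * (f x - fstar))
    (hinterp : ∀ i, g i xstar = 0)
    (hγ : γ = 1 / (L * (1 + 2 * ρ / μ)))
    (x : ℕ → (ℕ → ι) → E)
    (hx0 : ∀ ω, x 0 ω = x0)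
    (hrec : ∀ k ω, x (k + 1) ω = x k ω - γ • g (ω k) (x k ω)) :
    ∀ k : ℕ,
      (∑ ω : Fin k → ι, (∏ s, p (ω s)) *
          (f (x k (fun m => if h : m < k then ω ⟨m, h⟩ else default)) - fstar)) ≤
        (1 - γ * μ) ^ k * (f x0 - fstar) :=
  sgd_PL_interpolation_linear_general p hp0 hp1 f gradf g L μ ρ γ fstar xstar x0 hL hμ hρ hsmooth
    hPL hmin hgs hunbiased hER hinterp hγ x hx0 hrec
end

section
/- Let each f_i be ζ-quasar-convex with respect to x* and L_i-smooth, assume interpolation holds, and let v be a sampling vector. Then SGD with the stochastic Polyak step size γ_k = (f_v(x^k) - f_v*)/(c‖∇f_v(x^k)‖²) with c > 1/(2ζ) satisfies min over i < K of E[f(x^i) - f*] ≤ (2c²/(2cζ - 1)) (L_max_cal/K) ‖x^0 - x*‖², where L_max_cal satisfies (1/(2L_max_cal))(f(x) - f*) ≤ E[(f_v(x) - f_v*)²/‖∇f_v(x)‖²]. -/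
open scoped RealInnerProductSpace
open Finset

/-! Each draw of the stochastic Polyak step decreases `‖x - x*‖²` by at least
`(2cζ - 1)/c² · (f_v(x) - f_v*)² / ‖∇f_v(x)‖²`, because quasar-convexity of `f_v` (inherited from the
`fᵢ` as a nonnegative combination) bounds `⟪∇f_v(x), x - x*⟫` below by `ζ (f_v(x) - f_v*)`, and
interpolation makes `f_v* = f_v(x*)`. Averaging over the draw and using the defining inequality of
`𝓛_max` turns this into `E‖x^{k+1} - x*‖² ≤ E‖x^k - x*‖² - (2cζ - 1)/(2c²𝓛_max) E[f(x^k) - f*]`;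
telescoping over `k < K` and taking the smallest of the `K` expected gaps gives the bound. -/

section QuasarConvex

variable {E : Type*} [NormedAddCommGroup E] [InnerProductSpace ℝ E]

/-- `ζ`-quasar-convexity of `f` with respect to `xs`, along the gradient field `g`, in the form
obtained from `f xs ≥ f x + (1/ζ) ⟪g x, xs - x⟫` by multiplying through by `ζ > 0`. -/
def IsQuasarConvex (ζ : ℝ) (xs : E) (f : E → ℝ) (g : E → E) : Prop :=
  ∀ x, ζ * (f x - f xs) ≤ ⟪g x, x - xs⟫

theorem isQuasarConvex_of_forall_ge {ζ : ℝ} {xs : E} {f : E → ℝ} {g : E → E} (hζ : 0 < ζ)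
    (h : ∀ x, f xs ≥ f x + (1 / ζ) * ⟪g x, xs - x⟫) : IsQuasarConvex ζ xs f g := by
  intro x
  have hx := h x
  rw [← neg_sub x xs, inner_neg_right] at hx
  have : ⟪g x, x - xs⟫ = ζ * ((1 / ζ) * ⟪g x, x - xs⟫) := by field_simp
  nlinarith

theorem IsQuasarConvex.const_mul {ζ a : ℝ} {xs : E} {f : E → ℝ} {g : E → E}
    (h : IsQuasarConvex ζ xs f g) (ha : 0 ≤ a) :
    IsQuasarConvex ζ xs (fun x => a * f x) (fun x => a • g x) := by
  intro x
  rw [real_inner_smul_left]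
  nlinarith [h x]

theorem IsQuasarConvex.sum_mul {ι : Type*} (s : Finset ι) {ζ : ℝ} {xs : E} {w : ι → ℝ}
    {F : ι → E → ℝ} {G : ι → E → E} (hw : ∀ i ∈ s, 0 ≤ w i)
    (h : ∀ i ∈ s, IsQuasarConvex ζ xs (F i) (G i)) :
    IsQuasarConvex ζ xs (fun x => ∑ i ∈ s, w i * F i x) (fun x => ∑ i ∈ s, w i • G i x) := by
  intro x
  calc ζ * (∑ i ∈ s, w i * F i x - ∑ i ∈ s, w i * F i xs)
      = ∑ i ∈ s, w i * (ζ * (F i x - F i xs)) := by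
        rw [← sum_sub_distrib, mul_sum]
        exact sum_congr rfl fun i _ => by ring
    _ ≤ ∑ i ∈ s, w i * ⟪G i x, x - xs⟫ :=
        sum_le_sum fun i hi => mul_le_mul_of_nonneg_left (h i hi x) (hw i hi)
    _ = ⟪∑ i ∈ s, w i • G i x, x - xs⟫ := by
        simp only [sum_inner, real_inner_smul_left]

end QuasarConvex

section PolyakStep

variable {E : Type*} [NormedAddCommGroup E] [InnerProductSpace ℝ E]

theorem norm_polyak_step_sub_sq_le {c ζ D : ℝ} {g y xs : E} (hc : 0 < c) (hD : 0 ≤ D)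
    (hq : ζ * D ≤ ⟪g, y - xs⟫) :
    ‖y - (D / (c * ‖g‖ ^ 2)) • g - xs‖ ^ 2
      ≤ ‖y - xs‖ ^ 2 - (2 * c * ζ - 1) / c ^ 2 * (D ^ 2 / ‖g‖ ^ 2) := by
  rcases eq_or_ne g 0 with rfl | hg
  · simp
  have hg2 : 0 < ‖g‖ ^ 2 := by positivity
  set γ := D / (c * ‖g‖ ^ 2)
  have hγ : 0 ≤ γ := by positivity
  calc ‖y - γ • g - xs‖ ^ 2 = ‖y - xs‖ ^ 2 - 2 * γ * ⟪g, y - xs⟫ + γ ^ 2 * ‖g‖ ^ 2 := by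
        rw [sub_right_comm, norm_sub_sq_real, real_inner_smul_right, real_inner_comm,
          norm_smul, mul_pow, Real.norm_eq_abs, sq_abs]
        ring
    _ ≤ ‖y - xs‖ ^ 2 - 2 * γ * (ζ * D) + γ ^ 2 * ‖g‖ ^ 2 := by gcongr
    _ = ‖y - xs‖ ^ 2 - (2 * c * ζ - 1) / c ^ 2 * (D ^ 2 / ‖g‖ ^ 2) := by
        simp only [γ]
        field_simp
        ring

theorem sum_mul_norm_polyak_step_sub_sq_le {ι : Type*} [Fintype ι] {p : ι → ℝ}
    (hp0 : ∀ j, 0 ≤ p j) (hp1 : ∑ j, p j = 1) {fv : ι → E → ℝ} {gradfv : ι → E → E}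
    {ζ c m : ℝ} {xs : E} (hq : ∀ j, IsQuasarConvex ζ xs (fv j) (gradfv j))
    (hmin : ∀ j y, fv j xs ≤ fv j y) (hc : 0 < c) (hcζ : 0 ≤ 2 * c * ζ - 1) (y : E)
    (hm : m ≤ ∑ j, p j * ((fv j y - fv j xs) ^ 2 / ‖gradfv j y‖ ^ 2)) :
    ∑ j, p j * ‖y - ((fv j y - fv j xs) / (c * ‖gradfv j y‖ ^ 2)) • gradfv j y - xs‖ ^ 2
      ≤ ‖y - xs‖ ^ 2 - (2 * c * ζ - 1) / c ^ 2 * m := by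
  set α := (2 * c * ζ - 1) / c ^ 2
  calc _ ≤ ∑ j, p j * (‖y - xs‖ ^ 2 - α * ((fv j y - fv j xs) ^ 2 / ‖gradfv j y‖ ^ 2)) :=
        sum_le_sum fun j _ => mul_le_mul_of_nonneg_left
          (norm_polyak_step_sub_sq_le hc (sub_nonneg.2 (hmin j y)) (hq j y)) (hp0 j)
    _ = ‖y - xs‖ ^ 2 - α * ∑ j, p j * ((fv j y - fv j xs) ^ 2 / ‖gradfv j y‖ ^ 2) := by
        rw [mul_sum]
        simp only [mul_sub, sum_sub_distrib, ← sum_mul, hp1, one_mul]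
        exact congrArg _ (sum_congr rfl fun j _ => by ring)
    _ ≤ ‖y - xs‖ ^ 2 - α * m := by gcongr

end PolyakStep

section PathExpectation

variable {ι : Type*} [Inhabited ι]

def extendDefault (k : ℕ) (ω : Fin k → ι) : ℕ → ι :=
  fun m => if h : m < k then ω ⟨m, h⟩ else default

theorem extendDefault_snoc (k : ℕ) (ω : Fin k → ι) (j : ι) :
    extendDefault (k + 1) (Fin.snoc ω j) = Function.update (extendDefault k ω) k j := by
  funext m
  rcases lt_trichotomy m k with hm | rfl | hm
  · rw [Function.update_of_ne hm.ne, extendDefault, extendDefault, dif_pos hm,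
      dif_pos (Nat.lt_succ_of_lt hm)]
    exact Fin.snoc_castSucc (α := fun _ => ι) (i := ⟨m, hm⟩) ..
  · rw [Function.update_self, extendDefault, dif_pos m.lt_succ_self]
    exact Fin.snoc_last (α := fun _ => ι) ..
  · rw [Function.update_of_ne hm.ne', extendDefault, extendDefault, dif_neg (by omega),
      dif_neg (by omega)]

variable [Fintype ι]

/-- Expectation of `g` over `k` i.i.d. draws with law `p`; the later draws of the path are frozen
at `default`, as in the statement of `sgd_sps_quasar_convex`. -/
def pathExpect (p : ι → ℝ) (k : ℕ) (g : (ℕ → ι) → ℝ) : ℝ :=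
  ∑ ω : Fin k → ι, (∏ s, p (ω s)) * g (extendDefault k ω)

theorem pathExpect_zero (p : ι → ℝ) (g : (ℕ → ι) → ℝ) :
    pathExpect p 0 g = g fun _ => default := by
  simp only [pathExpect, Fintype.sum_unique, univ_eq_empty, prod_empty, one_mul]
  congr 1

theorem pathExpect_succ (p : ι → ℝ) (k : ℕ) (g : (ℕ → ι) → ℝ) :
    pathExpect p (k + 1) g = pathExpect p k fun ω => ∑ j, p j * g (Function.update ω k j) := by
  simp only [pathExpect, mul_sum]
  rw [← (Fin.snocEquiv fun _ => ι).sum_comp, Fintype.sum_prod_type, sum_comm]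
  refine sum_congr rfl fun ω _ => sum_congr rfl fun j _ => ?_
  simp only [Fin.snocEquiv, Equiv.coe_fn_mk, Fin.prod_univ_castSucc, Fin.snoc_castSucc,
    Fin.snoc_last, extendDefault_snoc]
  ring

theorem pathExpect_mono {p : ι → ℝ} (hp : ∀ j, 0 ≤ p j) (k : ℕ) {g h : (ℕ → ι) → ℝ}
    (hgh : ∀ ω, g ω ≤ h ω) : pathExpect p k g ≤ pathExpect p k h :=
  sum_le_sum fun _ _ => mul_le_mul_of_nonneg_left (hgh _) (prod_nonneg fun _ _ => hp _)

theorem pathExpect_nonneg {p : ι → ℝ} (hp : ∀ j, 0 ≤ p j) (k : ℕ) {g : (ℕ → ι) → ℝ}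
    (hg : ∀ ω, 0 ≤ g ω) : 0 ≤ pathExpect p k g :=
  sum_nonneg fun _ _ => mul_nonneg (prod_nonneg fun _ _ => hp _) (hg _)

theorem pathExpect_sub (p : ι → ℝ) (k : ℕ) (g h : (ℕ → ι) → ℝ) :
    pathExpect p k (fun ω => g ω - h ω) = pathExpect p k g - pathExpect p k h := by
  simp only [pathExpect, mul_sub, sum_sub_distrib]

theorem pathExpect_const_mul (p : ι → ℝ) (k : ℕ) (a : ℝ) (g : (ℕ → ι) → ℝ) :
    pathExpect p k (fun ω => a * g ω) = a * pathExpect p k g := by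
  simp only [pathExpect, mul_sum, mul_left_comm]

end PathExpectation

theorem iterate_congr_of_eq_of_lt {α ι : Type*} {x : ℕ → (ℕ → ι) → α} {T : ι → α → α}
    (h0 : ∀ ω ω', x 0 ω = x 0 ω') (hrec : ∀ k ω, x (k + 1) ω = T (ω k) (x k ω)) :
    ∀ k {ω ω' : ℕ → ι}, (∀ m < k, ω m = ω' m) → x k ω = x k ω'
  | 0, _, _, _ => h0 _ _
  | k + 1, ω, ω', h => by
    rw [hrec, hrec, h k k.lt_succ_self,
      iterate_congr_of_eq_of_lt h0 hrec k fun m hm => h m (hm.trans k.lt_succ_self)]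

theorem exists_lt_le_div_of_descent {R F : ℕ → ℝ} {β : ℝ} (hβ : 0 < β) (hR : ∀ k, 0 ≤ R k)
    (hstep : ∀ k, R (k + 1) ≤ R k - β * F k) {K : ℕ} (hK : 0 < K) :
    ∃ t < K, F t ≤ R 0 / (β * K) := by
  have htel : ∀ K, R K + β * ∑ t ∈ range K, F t ≤ R 0 := by
    intro K
    induction K with
    | zero => simp
    | succ K ih => rw [sum_range_succ]; linarith [hstep K]
  have hsum : ∑ t ∈ range K, F t ≤ ∑ _t ∈ range K, R 0 / (β * K) := by
    have hK' : (K : ℝ) ≠ 0 := Nat.cast_ne_zero.2 hK.ne'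
    rw [sum_const, card_range, nsmul_eq_mul, show (K : ℝ) * (R 0 / (β * K)) = R 0 / β by
      field_simp, le_div_iff₀ hβ]
    linarith [htel K, hR K]
  obtain ⟨t, ht, hFt⟩ := exists_le_of_sum_le (nonempty_range_iff.2 hK.ne') hsum
  exact ⟨t, mem_range.1 ht, hFt⟩

theorem pathExpect_sps_descent {E ι : Type*} [NormedAddCommGroup E] [InnerProductSpace ℝ E]
    [Fintype ι] [Inhabited ι] {p : ι → ℝ} (hp0 : ∀ j, 0 ≤ p j) (hp1 : ∑ j, p j = 1)
    {f : E → ℝ} {fv : ι → E → ℝ} {gradfv : ι → E → E} {ζ c κ : ℝ} {xs : E}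
    (hq : ∀ j, IsQuasarConvex ζ xs (fv j) (gradfv j)) (hmin : ∀ j y, fv j xs ≤ fv j y)
    (hc : 0 < c) (hcζ : 0 ≤ 2 * c * ζ - 1)
    (hκ : ∀ y, κ * (f y - f xs) ≤ ∑ j, p j * ((fv j y - fv j xs) ^ 2 / ‖gradfv j y‖ ^ 2))
    {x : ℕ → (ℕ → ι) → E} (h0 : ∀ ω ω', x 0 ω = x 0 ω')
    (hrec : ∀ k ω, x (k + 1) ω = x k ω -
        ((fv (ω k) (x k ω) - fv (ω k) xs) / (c * ‖gradfv (ω k) (x k ω)‖ ^ 2)) •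
          gradfv (ω k) (x k ω)) (k : ℕ) :
    pathExpect p (k + 1) (fun ω => ‖x (k + 1) ω - xs‖ ^ 2)
      ≤ pathExpect p k (fun ω => ‖x k ω - xs‖ ^ 2)
        - (2 * c * ζ - 1) / c ^ 2 * κ * pathExpect p k (fun ω => f (x k ω) - f xs) := by
  have hupdate (ω : ℕ → ι) (j : ι) : x k (Function.update ω k j) = x k ω :=
    iterate_congr_of_eq_of_lt (T := fun j y => y - ((fv j y - fv j xs) /
      (c * ‖gradfv j y‖ ^ 2)) • gradfv j y) h0 hrec k
      fun m hm => Function.update_of_ne hm.ne _ _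
  calc pathExpect p (k + 1) (fun ω => ‖x (k + 1) ω - xs‖ ^ 2)
      = pathExpect p k fun ω => ∑ j, p j * ‖x (k + 1) (Function.update ω k j) - xs‖ ^ 2 :=
        pathExpect_succ ..
    _ ≤ pathExpect p k fun ω =>
          ‖x k ω - xs‖ ^ 2 - (2 * c * ζ - 1) / c ^ 2 * (κ * (f (x k ω) - f xs)) :=
        pathExpect_mono hp0 k fun ω => by
          simp only [hrec, Function.update_self, hupdate]
          exact sum_mul_norm_polyak_step_sub_sq_le hp0 hp1 hq hmin hc hcζ _ (hκ _)
    _ = _ := by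
        rw [pathExpect_sub, pathExpect_const_mul, pathExpect_const_mul]
        ring

theorem sgd_sps_quasar_convex_general
    {E : Type*} [NormedAddCommGroup E] [InnerProductSpace ℝ E]
    (n : ℕ)
    {ι : Type*} [Fintype ι] [Inhabited ι] (p : ι → ℝ) (v : ι → Fin n → ℝ)
    (hp0 : ∀ j, 0 ≤ p j) (hp1 : ∑ j, p j = 1)
    (hv0 : ∀ j i, 0 ≤ v j i)
    (fi : Fin n → E → ℝ) (gradfi : Fin n → E → E)
    (f : E → ℝ) (fv : ι → E → ℝ) (gradfv : ι → E → E)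
    (ζ c Lm : ℝ) (xstar x0 : E)
    (hζ0 : 0 < ζ) (hc : c > 1 / (2 * ζ)) (hLm : 0 < Lm)
    (hfv : ∀ j x, fv j x = (1 / (n : ℝ)) * ∑ i, v j i * fi i x)
    (hgfv : ∀ j x, gradfv j x = (1 / (n : ℝ)) • ∑ i, v j i • gradfi i x)
    (hquasar : ∀ i (x : E), fi i xstar ≥ fi i x + (1 / ζ) * ⟪gradfi i x, xstar - x⟫)
    (hinterp : ∀ i (x : E), fi i xstar ≤ fi i x)
    (hLmax : ∀ x : E, 1 / (2 * Lm) * (f x - f xstar) ≤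
        ∑ j, p j * ((fv j x - fv j xstar) ^ 2 / ‖gradfv j x‖ ^ 2))
    (x : ℕ → (ℕ → ι) → E)
    (hx0 : ∀ ω, x 0 ω = x0)
    (hrec : ∀ k ω, x (k + 1) ω = x k ω -
        ((fv (ω k) (x k ω) - fv (ω k) xstar) / (c * ‖gradfv (ω k) (x k ω)‖ ^ 2)) •
          gradfv (ω k) (x k ω)) :
    ∀ K : ℕ, 0 < K → ∃ t < K,
      (∑ ω : Fin t → ι, (∏ s, p (ω s)) *
          (f (x t (fun m => if h : m < t then ω ⟨m, h⟩ else default)) - f xstar)) ≤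
        (2 * c ^ 2 / (2 * c * ζ - 1)) * (Lm / (K : ℝ)) * ‖x0 - xstar‖ ^ 2 := by
  intro K hK
  have hcζ : 0 < 2 * c * ζ - 1 := by
    have := (div_lt_iff₀ (by positivity : (0 : ℝ) < 2 * ζ)).1 hc
    linarith
  have hc0 : 0 < c := by nlinarith
  have hquasarv (j : ι) : IsQuasarConvex ζ xstar (fv j) (gradfv j) := by
    rw [funext (hfv j), funext (hgfv j)]
    exact (IsQuasarConvex.sum_mul _ (fun i _ => hv0 j i)
      fun i _ => isQuasarConvex_of_forall_ge hζ0 (hquasar i)).const_mul (by positivity)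
  have hminv (j : ι) (y : E) : fv j xstar ≤ fv j y := by
    rw [hfv, hfv]
    gcongr with i
    exacts [hv0 j i, hinterp i y]
  obtain ⟨t, ht, hFt⟩ := exists_lt_le_div_of_descent
    (R := fun k => pathExpect p k fun ω => ‖x k ω - xstar‖ ^ 2)
    (F := fun k => pathExpect p k fun ω => f (x k ω) - f xstar) (by positivity)
    (fun k => pathExpect_nonneg hp0 k fun _ => sq_nonneg _)
    (pathExpect_sps_descent hp0 hp1 hquasarv hminv hc0 hcζ.le hLmax
      (fun _ _ => (hx0 _).trans (hx0 _).symm) hrec) hK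
  refine ⟨t, ht, hFt.trans_eq ?_⟩
  rw [pathExpect_zero, hx0]
  field_simp

/-- SGD with the stochastic Polyak step size `γ_k = (f_v(x^k) - f_v*)/(c‖∇f_v(x^k)‖²)`,
`c > 1/(2ζ)`, on an interpolated average of `ζ`-quasar-convex `Lᵢ`-smooth functions satisfies
`min_{i<K} E[f(x^i) - f*] ≤ (2c²/(2cζ-1)) (𝓛_max/K) ‖x⁰ - x*‖²`. -/
theorem sgd_sps_quasar_convex
    {E : Type*} [NormedAddCommGroup E] [InnerProductSpace ℝ E]
    (n : ℕ) (hn : 0 < n)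
    {ι : Type*} [Fintype ι] [Inhabited ι] (p : ι → ℝ) (v : ι → Fin n → ℝ)
    (hp0 : ∀ j, 0 ≤ p j) (hp1 : ∑ j, p j = 1)
    (hv0 : ∀ j i, 0 ≤ v j i) (hv1 : ∀ i, (∑ j, p j * v j i) = 1)
    (fi : Fin n → E → ℝ) (gradfi : Fin n → E → E) (Li : Fin n → ℝ)
    (f : E → ℝ) (fv : ι → E → ℝ) (gradfv : ι → E → E)
    (ζ c Lm : ℝ) (xstar x0 : E)
    (hζ0 : 0 < ζ) (hζ1 : ζ ≤ 1) (hc : c > 1 / (2 * ζ)) (hLm : 0 < Lm)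
    (hf : ∀ x, f x = (1 / (n : ℝ)) * ∑ i, fi i x)
    (hfv : ∀ j x, fv j x = (1 / (n : ℝ)) * ∑ i, v j i * fi i x)
    (hgfv : ∀ j x, gradfv j x = (1 / (n : ℝ)) • ∑ i, v j i • gradfi i x)
    (hLi : ∀ i, 0 < Li i)
    (hsmooth : ∀ i (x z : E),
        fi i z - fi i x ≤ ⟪gradfi i x, z - x⟫ + Li i / 2 * ‖z - x‖ ^ 2)
    (hquasar : ∀ i (x : E), fi i xstar ≥ fi i x + (1 / ζ) * ⟪gradfi i x, xstar - x⟫)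
    (hinterp : ∀ i (x : E), fi i xstar ≤ fi i x)
    (hLmax : ∀ x : E, 1 / (2 * Lm) * (f x - f xstar) ≤
        ∑ j, p j * ((fv j x - fv j xstar) ^ 2 / ‖gradfv j x‖ ^ 2))
    (x : ℕ → (ℕ → ι) → E)
    (hx0 : ∀ ω, x 0 ω = x0)
    (hrec : ∀ k ω, x (k + 1) ω = x k ω -
        ((fv (ω k) (x k ω) - fv (ω k) xstar) / (c * ‖gradfv (ω k) (x k ω)‖ ^ 2)) •
          gradfv (ω k) (x k ω)) :
    ∀ K : ℕ, 0 < K → ∃ t < K,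
      (∑ ω : Fin t → ι, (∏ s, p (ω s)) *
          (f (x t (fun m => if h : m < t then ω ⟨m, h⟩ else default)) - f xstar)) ≤
        (2 * c ^ 2 / (2 * c * ζ - 1)) * (Lm / (K : ℝ)) * ‖x0 - xstar‖ ^ 2 :=
  sgd_sps_quasar_convex_general n p v hp0 hp1 hv0 fi gradfi f fv gradfv ζ c Lm xstar x0 hζ0 hc hLm
    hfv hgfv hquasar hinterp hLmax x hx0 hrec
end
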